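/- arXiv:2011.14071 — 4 statements merged into one kernel-verified Lean document; each statement's English description precedes it below -/
import Mathlib

section
/- Let G be a finite group. If the number of distinct element centralizers of G equals the index [G : Z(G)], then the quotient G/Z(G) is an elementary abelian 2-group. -/
/-- The set of element centralizers of `G`. -/
def cent (G : Type*) [Group G] : Set (Subgroup G) :=
  Set.range fun x : G => Subgroup.centralizer {x}

/-- The number of distinct element centralizers of `G`. -/
noncomputable def numCent (G : Type*) [Group G] : ℕ := (cent G).ncard

/-- The center of the centralizer `C(x)`, viewed as a subgroup of `G`. -/
def centerCentralizer {G : Type*} [Group G] (x : G) : Subgroup G :=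
  Subgroup.centralizer {x} ⊓
    Subgroup.centralizer ((Subgroup.centralizer {x} : Subgroup G) : Set G)

/-- `G` is an F-group: for non-central `x, y`, `C(x) ≤ C(y)` implies `C(x) = C(y)`. -/
def IsFGroup (G : Type*) [Group G] : Prop :=
  ∀ x y : G, x ∉ Subgroup.center G → y ∉ Subgroup.center G →
    Subgroup.centralizer {x} ≤ Subgroup.centralizer {y} →
    Subgroup.centralizer ({x} : Set G) = Subgroup.centralizer {y}

/-- The set of conjugates of a subgroup `H` of `G`. -/
def conjugates {G : Type*} [Group G] (H : Subgroup G) : Set (Subgroup G) :=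
  {K | ∃ g : G, K = Subgroup.map (MulAut.conj g).toMonoidHom H}

/-- The number of `z`-classes of `G`: elements are `z`-equivalent when their
centralizers are conjugate in `G`, so the number of `z`-classes is the number of
distinct conjugacy classes of element centralizers. -/
noncomputable def numZClasses (G : Type*) [Group G] : ℕ :=
  (Set.range fun x : G => conjugates (Subgroup.centralizer {x})).ncard

/-!
Since `C(xz) = C(x)` for central `z`, the map `x ↦ C(x)` factors through `G/Z(G)` and onto
`Cent(G)`; the hypothesis makes the induced map injective. As `C(x⁻¹) = C(x)`, this forces
`xZ = x⁻¹Z`, so every element of `G/Z(G)` squares to `1`, and such a group is abelian.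
-/

namespace Subgroup

variable {G : Type*} [Group G]

theorem centralizer_singleton_inv (x : G) :
    centralizer {x⁻¹} = centralizer ({x} : Set G) := by
  ext g
  simp only [mem_centralizer_singleton_iff]
  exact Commute.inv_right_iff

theorem centralizer_singleton_mul_of_mem_center {x z : G} (hz : z ∈ center G) :
    centralizer {x * z} = centralizer ({x} : Set G) := by
  ext g
  simp only [mem_centralizer_singleton_iff]
  change Commute g (x * z) ↔ Commute g x
  have hgz : Commute g z := mem_center_iff.1 hz g
  exact ⟨fun h => by simpa using Commute.mul_right h hgz.inv_right,
    fun h => Commute.mul_right h hgz⟩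

variable (G) in
def centralizerOfQuotientCenter : G ⧸ center G → Subgroup G :=
  Quotient.lift (fun x => centralizer {x}) fun x y hxy => by
    rw [← mul_inv_cancel_left x y]
    exact (centralizer_singleton_mul_of_mem_center (QuotientGroup.leftRel_apply.1 hxy)).symm

theorem range_centralizerOfQuotientCenter :
    Set.range (centralizerOfQuotientCenter G) = cent G :=
  (QuotientGroup.mk_surjective.range_comp _).symm

theorem centralizerOfQuotientCenter_injective [Finite G]
    (h : numCent G = (center G).index) : (centralizerOfQuotientCenter G).Injective := by
  have hcard : Nat.card (G ⧸ center G) ≤ Nat.card (Set.range (centralizerOfQuotientCenter G)) := by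
    rw [Nat.card_coe_set_eq, range_centralizerOfQuotientCenter]
    exact h.ge
  exact Set.rangeFactorization_injective.mp
    (Set.rangeFactorization_surjective.bijective_of_nat_card_le hcard).1

theorem sq_eq_one_of_centralizerOfQuotientCenter_injective
    (hinj : (centralizerOfQuotientCenter G).Injective) (a : G ⧸ center G) : a ^ 2 = 1 := by
  obtain ⟨x, rfl⟩ := QuotientGroup.mk_surjective a
  have hx : (x : G ⧸ center G) = (x⁻¹ : G) :=
    hinj (centralizer_singleton_inv x).symm
  rw [pow_two, mul_eq_one_iff_eq_inv, ← QuotientGroup.mk_inv, ← hx]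

end Subgroup

theorem stmt2 (G : Type*) [Group G] [Finite G]
    (h : numCent G = (Subgroup.center G).index) :
    (∀ a b : G ⧸ Subgroup.center G, a * b = b * a) ∧
      (∀ a : G ⧸ Subgroup.center G, a ^ 2 = 1) := by
  have hsq := Subgroup.sq_eq_one_of_centralizerOfQuotientCenter_injective
    (Subgroup.centralizerOfQuotientCenter_injective h)
  exact ⟨Commute.of_orderOf_dvd_two fun a => orderOf_dvd_of_pow_eq_one (hsq a), hsq⟩
end

section
/- Let G be a finite group with nontrivial center quotient, and let p be the smallest prime divisor of |G|. If G is non-abelian, then |Cent(G)| ≥ p + 2, with equality if and only if G/Z(G) ≅ C_p × C_p. -/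
/-!
The centralizers of the non-central elements are proper subgroups covering `G`, each of order at
most `|G| / p`. Counting the complement of one member `H` of such a cover inside the other members
gives `|G| ≤ ∑_{K ≠ H} |K| ≤ (n - 1) |G| / p` for a cover by `n` of them, so `n ≥ p + 1` and
`|Cent(G)| ≥ p + 2`. If `n = p + 1`, equality forces every member other than `H` to have index `p`,
and every member contains an element lying in no other member (else `p` members would cover `G`).
Two such centralizers `C(x)`, `C(y)` of index `p` then meet exactly in `Z(G)`, so
`[G : Z(G)] ≤ p²`; since `G / Z(G)` is not cyclic, it has order `p²` and is `C_p × C_p`.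
Conversely, if `G / Z(G) ≅ C_p × C_p`, the centralizer of a non-central `x` is the preimage of
`⟨x Z(G)⟩`, so the proper centralizers correspond to the `p + 1` lines of `C_p × C_p`.
-/

open Subgroup

namespace Subgroup

lemma centralizer_singleton_eq_top_iff {G : Type*} [Group G] {x : G} :
    centralizer {x} = ⊤ ↔ x ∈ center G := by
  rw [centralizer_eq_top_iff_subset, Set.singleton_subset_iff, SetLike.mem_coe]

lemma not_isCyclic_quotient_center {G : Type*} [Group G]
    (hna : ¬ ∀ a b : G, a * b = b * a) : ¬ IsCyclic (G ⧸ center G) := fun _ =>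
  hna ((QuotientGroup.mk' (center G)).isMulCommutative_of_isCyclic_of_ker_le_center
    (QuotientGroup.ker_mk' _).le).is_comm.comm

variable {G : Type*} [Group G] [Finite G]

lemma card_le_index_mul_card_inf (H K : Subgroup G) :
    Nat.card K ≤ H.index * Nat.card (H ⊓ K : Subgroup G) := by
  refine Nat.le_of_mul_le_mul_left ?_ (Nat.pos_of_ne_zero (index_ne_zero_of_finite (H := K)))
  calc K.index * Nat.card K = (H ⊓ K).index * Nat.card (H ⊓ K : Subgroup G) := by
        rw [index_mul_card, index_mul_card]
    _ ≤ H.index * K.index * Nat.card (H ⊓ K : Subgroup G) :=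
        Nat.mul_le_mul_right _ index_inf_le
    _ = K.index * (H.index * Nat.card (H ⊓ K : Subgroup G)) := by ring

/- Each other member `K` meets `H` in at least `|K| / [G : H]` elements, so it covers at most
`(1 - 1 / [G : H]) |K|` elements of the complement of `H`, which has `(1 - 1 / [G : H]) |G|`. -/
lemma card_le_sum_card_erase_of_cover [DecidableEq (Subgroup G)] {S : Finset (Subgroup G)}
    (hcov : ∀ g : G, ∃ K ∈ S, g ∈ K) {H : Subgroup G} (hHS : H ∈ S) (hH : H ≠ ⊤) :
    Nat.card G ≤ ∑ K ∈ S.erase H, Nat.card K := by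
  have hd : 1 < H.index := one_lt_index_of_ne_top hH
  have hcompl : (H : Set G)ᶜ ⊆ ⋃ K ∈ S.erase H, (K : Set G) \ H := by
    intro g hg
    obtain ⟨K, hKS, hgK⟩ := hcov g
    exact Set.mem_biUnion (Finset.mem_erase.2 ⟨by rintro rfl; exact hg hgK, hKS⟩) ⟨hgK, hg⟩
  have hout : Nat.card G ≤ Nat.card H + ∑ K ∈ S.erase H, ((K : Set G) \ H).ncard := by
    rw [← Set.ncard_add_ncard_compl (H : Set G), ← Nat.card_coe_set_eq]
    exact Nat.add_le_add_left ((Set.ncard_le_ncard hcompl).trans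
      ((S.erase H).set_ncard_biUnion_le _)) _
  have hterm : ∀ K : Subgroup G,
      H.index * ((K : Set G) \ H).ncard + Nat.card K ≤ H.index * Nat.card K := by
    intro K
    have hsplit : Nat.card (H ⊓ K : Subgroup G) + ((K : Set G) \ H).ncard = Nat.card K := by
      rw [← SetLike.coe_sort_coe (H ⊓ K), ← SetLike.coe_sort_coe K, Nat.card_coe_set_eq,
        Nat.card_coe_set_eq, coe_inf, Set.inter_comm]
      exact Set.ncard_inter_add_ncard_sdiff_eq_ncard _ _
    have := card_le_index_mul_card_inf H K
    nlinarith [congrArg (H.index * ·) hsplit]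
  have hsum := Finset.sum_le_sum fun K (_ : K ∈ S.erase H) => hterm K
  rw [Finset.sum_add_distrib, ← Finset.mul_sum, ← Finset.mul_sum] at hsum
  have hGH := index_mul_card H
  nlinarith

end Subgroup

section SmallestPrimeDivisor

variable {G : Type*} [Group G] [Finite G] {p : ℕ}

lemma le_of_dvd_card_of_ne_one (hmin : ∀ q : ℕ, q.Prime → q ∣ Nat.card G → p ≤ q) {n : ℕ}
    (hn : n ∣ Nat.card G) (hn1 : n ≠ 1) : p ≤ n :=
  (hmin _ (Nat.minFac_prime hn1) ((Nat.minFac_dvd n).trans hn)).trans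
    (Nat.minFac_le (Nat.pos_of_dvd_of_pos hn Nat.card_pos))

lemma mul_card_le_card_of_ne_top (hmin : ∀ q : ℕ, q.Prime → q ∣ Nat.card G → p ≤ q)
    {H : Subgroup G} (hH : H ≠ ⊤) : p * Nat.card H ≤ Nat.card G :=
  H.index_mul_card ▸ Nat.mul_le_mul_right _
    (le_of_dvd_card_of_ne_one hmin H.index_dvd_card (mt index_eq_one.1 hH))

lemma add_one_le_card_of_cover (hmin : ∀ q : ℕ, q.Prime → q ∣ Nat.card G → p ≤ q)
    {S : Finset (Subgroup G)} (hS : ∀ H ∈ S, H ≠ ⊤)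
    (hcov : ∀ g : G, ∃ H ∈ S, g ∈ H) : p + 1 ≤ S.card := by
  classical
  obtain ⟨H, hHS, -⟩ := hcov 1
  have hbound : p * Nat.card G ≤ (S.card - 1) * Nat.card G :=
    calc p * Nat.card G ≤ p * ∑ K ∈ S.erase H, Nat.card K :=
          Nat.mul_le_mul_left _ (card_le_sum_card_erase_of_cover hcov hHS (hS H hHS))
      _ = ∑ K ∈ S.erase H, p * Nat.card K := Finset.mul_sum _ _ _
      _ ≤ ∑ _K ∈ S.erase H, Nat.card G := Finset.sum_le_sum fun K hK =>
          mul_card_le_card_of_ne_top hmin (hS K (Finset.mem_of_mem_erase hK))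
      _ = (S.card - 1) * Nat.card G := by rw [Finset.sum_const, Finset.card_erase_of_mem hHS,
          smul_eq_mul]
  have := Nat.le_of_mul_le_mul_right hbound Nat.card_pos
  have := Finset.card_pos.2 ⟨H, hHS⟩
  omega

lemma index_eq_of_mem_erase_of_card_eq_add_one [DecidableEq (Subgroup G)]
    (hmin : ∀ q : ℕ, q.Prime → q ∣ Nat.card G → p ≤ q)
    {S : Finset (Subgroup G)} (hS : ∀ H ∈ S, H ≠ ⊤) (hcov : ∀ g : G, ∃ H ∈ S, g ∈ H)
    (hcard : S.card = p + 1) {H K : Subgroup G}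
    (hH : H ∈ S) (hK : K ∈ S.erase H) : K.index = p := by
  have hle : ∀ K ∈ S.erase H, p * Nat.card K ≤ Nat.card G := fun K hK =>
    mul_card_le_card_of_ne_top hmin (hS K (Finset.mem_of_mem_erase hK))
  have hsum : ∑ K ∈ S.erase H, p * Nat.card K = ∑ _K ∈ S.erase H, Nat.card G := by
    refine le_antisymm (Finset.sum_le_sum hle) ?_
    calc ∑ _K ∈ S.erase H, Nat.card G = p * Nat.card G := by
          rw [Finset.sum_const, Finset.card_erase_of_mem hH, hcard, smul_eq_mul, Nat.add_sub_cancel]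
      _ ≤ p * ∑ K ∈ S.erase H, Nat.card K :=
          Nat.mul_le_mul_left _ (card_le_sum_card_erase_of_cover hcov hH (hS H hH))
      _ = ∑ K ∈ S.erase H, p * Nat.card K := Finset.mul_sum _ _ _
  have hK' := (Finset.sum_eq_sum_iff_of_le hle).1 hsum K hK
  exact Nat.eq_of_mul_eq_mul_right Nat.card_pos (K.index_mul_card.trans hK'.symm)

lemma exists_forall_mem_iff_eq_of_card_eq_add_one
    (hmin : ∀ q : ℕ, q.Prime → q ∣ Nat.card G → p ≤ q)
    {S : Finset (Subgroup G)} (hS : ∀ H ∈ S, H ≠ ⊤) (hcov : ∀ g : G, ∃ H ∈ S, g ∈ H)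
    (hcard : S.card = p + 1) {H : Subgroup G} (hH : H ∈ S) :
    ∃ x, ∀ K ∈ S, x ∈ K ↔ K = H := by
  classical
  by_contra! hred
  have hcov' : ∀ g : G, ∃ K ∈ S.erase H, g ∈ K := by
    intro g
    obtain ⟨K, hKS, hgK⟩ := hcov g
    by_cases hKH : K = H
    · obtain ⟨K', hK'S, ⟨hgK', hK'H⟩ | ⟨hgK', rfl⟩⟩ := hred g
      · exact ⟨K', Finset.mem_erase.2 ⟨hK'H, hK'S⟩, hgK'⟩
      · exact absurd (hKH ▸ hgK) hgK'
    · exact ⟨K, Finset.mem_erase.2 ⟨hKH, hKS⟩, hgK⟩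
  have := add_one_le_card_of_cover hmin (fun K hK => hS K (Finset.mem_of_mem_erase hK)) hcov'
  rw [Finset.card_erase_of_mem hH, hcard] at this
  omega

lemma eq_sq_of_dvd_card_of_le_mul_self (hmin : ∀ q : ℕ, q.Prime → q ∣ Nat.card G → p ≤ q)
    {n : ℕ} (hn : n ∣ Nat.card G) (hpn : p ∣ n) (hle : n ≤ p * p) (hne : n ≠ p) : n = p ^ 2 := by
  obtain ⟨k, rfl⟩ := hpn
  have hn0 : p * k ≠ 0 := by
    rintro h
    rw [h, zero_dvd_iff] at hn
    exact Nat.card_pos.ne' hn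
  have hkp : k ≤ p := Nat.le_of_mul_le_mul_left hle (Nat.pos_of_ne_zero (left_ne_zero_of_mul hn0))
  have hk1 : k ≠ 1 := by rintro rfl; exact hne (mul_one p)
  rw [le_antisymm hkp (le_of_dvd_card_of_ne_one hmin ((dvd_mul_left k p).trans hn) hk1), sq]

end SmallestPrimeDivisor

section PrimeSquare

variable {Q : Type*} [Group Q] {p : ℕ}

lemma pow_eq_one_of_card_eq_sq_of_not_isCyclic (hp : p.Prime) (hcard : Nat.card Q = p ^ 2)
    (hnc : ¬ IsCyclic Q) (q : Q) : q ^ p = 1 := by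
  have : Finite Q := Nat.finite_of_card_ne_zero (by rw [hcard]; exact pow_ne_zero 2 hp.ne_zero)
  obtain ⟨k, hk, hq⟩ := (Nat.dvd_prime_pow hp).1 (hcard ▸ orderOf_dvd_natCard q)
  have hk1 : k ≤ 1 := by
    by_contra hk1
    exact hnc (isCyclic_of_orderOf_eq_card q (by rw [hq, show k = 2 by omega, hcard]))
  rw [← orderOf_dvd_iff_pow_eq_one, hq]
  simpa using pow_dvd_pow p hk1

lemma nonempty_addEquiv_of_card_eq_sq_of_nsmul_eq_zero {V : Type*} [AddCommGroup V]
    (hp : p.Prime) (hcard : Nat.card V = p ^ 2) (hexp : ∀ v : V, p • v = 0) :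
    Nonempty (V ≃+ ZMod p × ZMod p) := by
  have : Fact p.Prime := ⟨hp⟩
  have : Finite V := Nat.finite_of_card_ne_zero (by rw [hcard]; exact pow_ne_zero 2 hp.ne_zero)
  have := Fintype.ofFinite V
  have : Module (ZMod p) V := AddCommGroup.zmodModule hexp
  have hfr : Module.finrank (ZMod p) V = Module.finrank (ZMod p) (ZMod p × ZMod p) := by
    have h := Module.card_eq_pow_finrank (K := ZMod p) (V := V)
    rw [ZMod.card, Fintype.card_eq_nat_card, hcard] at h
    rw [Module.finrank_prod, Module.finrank_self]
    exact Nat.pow_right_injective hp.two_le h.symm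
  have : Module.Finite (ZMod p) V := Module.Finite.of_finite
  exact (FiniteDimensional.nonempty_linearEquiv_of_finrank_eq hfr).map LinearEquiv.toAddEquiv

lemma nonempty_mulEquiv_of_card_eq_sq_of_not_isCyclic (hp : p.Prime) (hcard : Nat.card Q = p ^ 2)
    (hnc : ¬ IsCyclic Q) : Nonempty (Q ≃* Multiplicative (ZMod p × ZMod p)) := by
  have : Fact p.Prime := ⟨hp⟩
  let : CommGroup Q := IsPGroup.commGroupOfCardEqPrimeSq hcard
  obtain ⟨e⟩ := nonempty_addEquiv_of_card_eq_sq_of_nsmul_eq_zero (V := Additive Q) hp hcard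
    fun x => Additive.toMul.injective <| by
      simpa using pow_eq_one_of_card_eq_sq_of_not_isCyclic hp hcard hnc x.toMul
  exact ⟨(MulEquiv.refl Q : Q ≃* Multiplicative (Additive Q)).trans e.toMultiplicative⟩

lemma ncard_image_zpowers_mul [Finite Q] (hp : p.Prime) (hexp : ∀ v : Q, v ^ p = 1) :
    (zpowers '' {v : Q | v ≠ 1}).ncard * (p - 1) = Nat.card Q - 1 := by
  classical
  have := Fintype.ofFinite Q
  have : Fact p.Prime := ⟨hp⟩
  have hcard : ∀ v : Q, v ≠ 1 → Nat.card (zpowers v) = p := fun v hv => by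
    rw [Nat.card_zpowers, orderOf_eq_prime (hexp v) hv]
  set s : Finset Q := Finset.univ.erase 1
  have hfiber : ∀ L ∈ s.image zpowers, (s.filter (zpowers · = L)).card = p - 1 := by
    simp only [Finset.mem_image]
    rintro _ ⟨v, hv, rfl⟩
    have hv1 : v ≠ 1 := Finset.ne_of_mem_erase hv
    have : ((s.filter (zpowers · = zpowers v) : Finset Q) : Set Q) = (zpowers v : Set Q) \ {1} := by
      ext w
      simp only [Finset.coe_filter, Finset.mem_erase, Finset.mem_univ, and_true, Set.mem_ofPred_eq,
        Set.mem_sdiff, SetLike.mem_coe, Set.mem_singleton_iff, s]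
      refine ⟨fun ⟨hw1, hw⟩ => ⟨hw ▸ mem_zpowers w, hw1⟩, fun ⟨hw, hw1⟩ => ⟨hw1, ?_⟩⟩
      exact eq_of_le_of_card_ge (zpowers_le.2 hw) (by rw [hcard v hv1, hcard w hw1])
    rw [← Set.ncard_coe_finset, this, Set.ncard_sdiff_singleton_of_mem (one_mem _),
      ← Nat.card_coe_set_eq, SetLike.coe_sort_coe, hcard v hv1]
  have hs : {v : Q | v ≠ 1} = s := by ext; simp [s]
  rw [hs, ← Finset.coe_image, Set.ncard_coe_finset, ← Finset.sum_const_nat hfiber,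
    ← Finset.card_eq_sum_card_image, Finset.card_erase_of_mem (Finset.mem_univ 1),
    Finset.card_univ, Nat.card_eq_fintype_card]

end PrimeSquare

noncomputable def properCent (G : Type*) [Group G] [Finite G] : Finset (Subgroup G) :=
  (Set.toFinite ((fun x : G => centralizer {x}) '' {x | x ∉ center G})).toFinset

section Centralizers

variable {G : Type*} [Group G] [Finite G]

lemma mem_properCent {H : Subgroup G} :
    H ∈ properCent G ↔ ∃ x ∉ center G, centralizer {x} = H := by
  simp [properCent]

lemma ne_top_of_mem_properCent {H : Subgroup G} (hH : H ∈ properCent G) : H ≠ ⊤ := by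
  obtain ⟨x, hx, rfl⟩ := mem_properCent.1 hH
  exact mt centralizer_singleton_eq_top_iff.1 hx

lemma center_le_of_mem_properCent {H : Subgroup G} (hH : H ∈ properCent G) : center G ≤ H := by
  obtain ⟨x, -, rfl⟩ := mem_properCent.1 hH
  exact center_le_centralizer {x}

lemma numCent_eq_card_properCent_add_one : numCent G = (properCent G).card + 1 := by
  have hcent : cent G = insert ⊤ (properCent G : Set (Subgroup G)) := by
    ext H
    simp only [cent, Set.mem_range, Set.mem_insert_iff, Finset.mem_coe, mem_properCent]
    constructor
    · rintro ⟨x, rfl⟩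
      by_cases hx : x ∈ center G
      · exact Or.inl (centralizer_singleton_eq_top_iff.2 hx)
      · exact Or.inr ⟨x, hx, rfl⟩
    · rintro (rfl | ⟨x, -, rfl⟩)
      exacts [⟨1, centralizer_singleton_eq_top_iff.2 (one_mem _)⟩, ⟨x, rfl⟩]
  rw [numCent, hcent, Set.ncard_insert_of_notMem (fun h => ne_top_of_mem_properCent h rfl),
    Set.ncard_coe_finset]

lemma exists_mem_properCent_mem (hna : ¬ ∀ a b : G, a * b = b * a) (g : G) :
    ∃ H ∈ properCent G, g ∈ H := by
  by_cases hg : g ∈ center G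
  · obtain ⟨x, hx⟩ : ∃ x, x ∉ center G := by
      by_contra! h
      exact hna fun a b => mem_center_iff.1 (h b) a
    exact ⟨_, mem_properCent.2 ⟨x, hx, rfl⟩, center_le_centralizer {x} hg⟩
  · exact ⟨_, mem_properCent.2 ⟨g, hg, rfl⟩, mem_centralizer_singleton_iff.2 rfl⟩

lemma centralizer_eq_of_forall_mem_iff_eq {x : G} {H : Subgroup G}
    (hx : ∀ K ∈ properCent G, x ∈ K ↔ K = H) (hH : ∃ K ∈ properCent G, K ≠ H) :
    centralizer {x} = H := by
  obtain ⟨K, hK, hKH⟩ := hH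
  have hxc : x ∉ center G := fun h => hKH ((hx K hK).1 (center_le_of_mem_properCent hK h))
  exact (hx _ (mem_properCent.2 ⟨x, hxc, rfl⟩)).1 (mem_centralizer_singleton_iff.2 rfl)

lemma centralizer_inf_centralizer_eq_center {x y : G}
    (hx : ∀ K ∈ properCent G, x ∈ K ↔ K = centralizer {x})
    (hy : ∀ K ∈ properCent G, y ∈ K ↔ K = centralizer {y})
    (hxy : centralizer {x} ≠ centralizer {y}) :
    centralizer {x} ⊓ centralizer {y} = center G := by
  refine le_antisymm (fun g ⟨hgx, hgy⟩ => ?_)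
    (le_inf (center_le_centralizer _) (center_le_centralizer _))
  by_contra hg
  have hCg := mem_properCent.2 ⟨g, hg, rfl⟩
  have hcomm {a : G} (ha : g ∈ centralizer {a}) : a ∈ centralizer {g} :=
    mem_centralizer_singleton_iff.2 (mem_centralizer_singleton_iff.1 ha).symm
  exact hxy (((hx _ hCg).1 (hcomm hgx)).symm.trans ((hy _ hCg).1 (hcomm hgy)))

end Centralizers

lemma centralizer_eq_comap_zpowers {G : Type*} [Group G] {p : ℕ} (hp : p.Prime)
    (hcard : Nat.card (G ⧸ center G) = p ^ 2) (hexp : ∀ v : G ⧸ center G, v ^ p = 1) {x : G}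
    (hx : x ∉ center G) :
    centralizer {x} = (zpowers (x : G ⧸ center G)).comap (QuotientGroup.mk' (center G)) := by
  have : Fact p.Prime := ⟨hp⟩
  set P := (zpowers (x : G ⧸ center G)).comap (QuotientGroup.mk' (center G))
  have hle : P ≤ centralizer {x} := by
    intro g hg
    obtain ⟨k, hk⟩ := mem_zpowers_iff.1 (mem_comap.1 hg)
    have hz : (x ^ k)⁻¹ * g ∈ center G := QuotientGroup.eq.1 (by simpa using hk)
    rw [mem_centralizer_singleton_iff, ← mul_inv_cancel_left (x ^ k) g]
    exact (((Commute.refl x).zpow_left k).mul_left (mem_center_iff.1 hz x).symm).eq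
  have hidx : P.index = p := by
    rw [index_comap_of_surjective _ (QuotientGroup.mk'_surjective _)]
    have h := index_mul_card (zpowers (x : G ⧸ center G))
    rw [Nat.card_zpowers, orderOf_eq_prime (hexp _) (mt (QuotientGroup.eq_one_iff x).1 hx), hcard,
      sq] at h
    exact Nat.eq_of_mul_eq_mul_right hp.pos h
  have hCidx : (centralizer {x}).index = p :=
    ((Nat.dvd_prime hp).1 (hidx ▸ index_dvd_of_le hle)).resolve_left
      (mt index_eq_one.1 (mt centralizer_singleton_eq_top_iff.1 hx))
  have : P.FiniteIndex := ⟨hidx ▸ hp.ne_zero⟩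
  refine (hle.lt_or_eq.resolve_left fun hlt => ?_).symm
  exact (index_strictAnti hlt).ne (hCidx.trans hidx.symm)

section QuotientCenter

variable {G : Type*} [Group G] [Finite G] {p : ℕ}

lemma index_center_eq_sq (hp : p.Prime) (hmin : ∀ q : ℕ, q.Prime → q ∣ Nat.card G → p ≤ q)
    (hna : ¬ ∀ a b : G, a * b = b * a) (hcard : (properCent G).card = p + 1) :
    (center G).index = p ^ 2 := by
  classical
  have hS : ∀ H ∈ properCent G, H ≠ ⊤ := fun _ => ne_top_of_mem_properCent
  have hcov := exists_mem_properCent_mem hna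
  obtain ⟨H₀, hH₀⟩ : (properCent G).Nonempty := Finset.card_pos.1 (by omega)
  obtain ⟨H₁, h₁, H₂, h₂, hne⟩ := Finset.one_lt_card.1 <| show 1 < ((properCent G).erase H₀).card by
    rw [Finset.card_erase_of_mem hH₀, hcard]
    exact hp.one_lt
  have hidx₁ := index_eq_of_mem_erase_of_card_eq_add_one hmin hS hcov hcard hH₀ h₁
  have hidx₂ := index_eq_of_mem_erase_of_card_eq_add_one hmin hS hcov hcard hH₀ h₂
  obtain ⟨x, hx⟩ := exists_forall_mem_iff_eq_of_card_eq_add_one hmin hS hcov hcard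
    (Finset.mem_of_mem_erase h₁)
  obtain ⟨y, hy⟩ := exists_forall_mem_iff_eq_of_card_eq_add_one hmin hS hcov hcard
    (Finset.mem_of_mem_erase h₂)
  obtain rfl : centralizer {x} = H₁ :=
    centralizer_eq_of_forall_mem_iff_eq hx ⟨H₂, Finset.mem_of_mem_erase h₂, hne.symm⟩
  obtain rfl : centralizer {y} = H₂ :=
    centralizer_eq_of_forall_mem_iff_eq hy ⟨_, Finset.mem_of_mem_erase h₁, hne⟩
  have hinf := centralizer_inf_centralizer_eq_center hx hy hne
  have : Fact p.Prime := ⟨hp⟩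
  refine eq_sq_of_dvd_card_of_le_mul_self hmin (index_dvd_card _)
    (hidx₁ ▸ index_dvd_of_le (center_le_centralizer {x})) ?_
    fun h => not_isCyclic_quotient_center hna (isCyclic_of_prime_card h)
  calc (center G).index = (centralizer {x} ⊓ centralizer {y}).index := by rw [hinf]
    _ ≤ (centralizer {x}).index * (centralizer {y}).index := index_inf_le
    _ = p * p := by rw [hidx₁, hidx₂]

lemma coe_properCent_eq_image (hp : p.Prime) (hcard : Nat.card (G ⧸ center G) = p ^ 2)
    (hexp : ∀ v : G ⧸ center G, v ^ p = 1) :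
    (properCent G : Set (Subgroup G)) =
      comap (QuotientGroup.mk' (center G)) '' (zpowers '' {v | v ≠ 1}) := by
  ext H
  simp only [Finset.mem_coe, mem_properCent, Set.image_image, Set.mem_image, Set.mem_ofPred_eq]
  constructor
  · rintro ⟨x, hx, rfl⟩
    exact ⟨x, mt (QuotientGroup.eq_one_iff x).1 hx,
      (centralizer_eq_comap_zpowers hp hcard hexp hx).symm⟩
  · rintro ⟨v, hv, rfl⟩
    obtain ⟨x, rfl⟩ := QuotientGroup.mk_surjective v
    have hx : x ∉ center G := mt (QuotientGroup.eq_one_iff x).2 hv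
    exact ⟨x, hx, centralizer_eq_comap_zpowers hp hcard hexp hx⟩

lemma card_properCent_of_mulEquiv (hp : p.Prime)
    (e : G ⧸ center G ≃* Multiplicative (ZMod p × ZMod p)) : (properCent G).card = p + 1 := by
  have : Fact p.Prime := ⟨hp⟩
  have hcard : Nat.card (G ⧸ center G) = p ^ 2 := by
    rw [Nat.card_congr e.toEquiv]
    simp [sq]
  have hexp : ∀ v : G ⧸ center G, v ^ p = 1 := fun v => e.injective <| by
    rw [map_pow, map_one]
    apply Multiplicative.toAdd.injective
    ext <;> simp
  have hlines := ncard_image_zpowers_mul hp hexp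
  rw [← Set.ncard_image_of_injective _ (comap_injective (QuotientGroup.mk'_surjective _)),
    ← coe_properCent_eq_image hp hcard hexp, Set.ncard_coe_finset, hcard,
    show p ^ 2 - 1 = (p + 1) * (p - 1) by simpa using Nat.sq_sub_sq p 1] at hlines
  exact Nat.eq_of_mul_eq_mul_right (Nat.sub_pos_of_lt hp.one_lt) hlines

end QuotientCenter

theorem stmt3_general (G : Type*) [Group G] [Finite G] (p : ℕ) (hp : p.Prime)
    (hmin : ∀ q : ℕ, q.Prime → q ∣ Nat.card G → p ≤ q)
    (hna : ¬ ∀ a b : G, a * b = b * a) :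
    p + 2 ≤ numCent G ∧
      (numCent G = p + 2 ↔
        Nonempty ((G ⧸ Subgroup.center G) ≃* Multiplicative (ZMod p × ZMod p))) := by
  rw [numCent_eq_card_properCent_add_one]
  have hlower : p + 1 ≤ (properCent G).card := add_one_le_card_of_cover hmin
    (fun _ => ne_top_of_mem_properCent) (exists_mem_properCent_mem hna)
  refine ⟨by omega, fun h => ?_, fun ⟨e⟩ => ?_⟩
  · exact nonempty_mulEquiv_of_card_eq_sq_of_not_isCyclic hp
      (index_center_eq_sq hp hmin hna (by omega)) (not_isCyclic_quotient_center hna)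
  · rw [card_properCent_of_mulEquiv hp e]

theorem stmt3 (G : Type*) [Group G] [Finite G] (p : ℕ) (hp : p.Prime)
    (hdvd : p ∣ Nat.card G)
    (hmin : ∀ q : ℕ, q.Prime → q ∣ Nat.card G → p ≤ q)
    (hna : ¬ ∀ a b : G, a * b = b * a) :
    p + 2 ≤ numCent G ∧
      (numCent G = p + 2 ↔
        Nonempty ((G ⧸ Subgroup.center G) ≃* Multiplicative (ZMod p × ZMod p))) :=
  stmt3_general G p hp hmin hna
end

section
/- Let G be a finite group in which every proper centralizer has index p (a prime), i.e., [G : C(x)] = p for all non-central x ∈ G. Then G/Z(G) is an elementary abelian p-group. -/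
/-!
The hypothesis passes to `G ⧸ Z(G)`, and `Z(G)` is nontrivial as soon as `G` is not abelian, since
a nontrivial element of the centre of a Sylow `p`-subgroup has a centralizer of index prime to `p`.
If `x Z(G)` is central in `G ⧸ Z(G)`, then `g ↦ ⁅x, g⁆` is a homomorphism into `Z(G)` with kernel
`C(x)`, so `⁅x ^ p, g⁆ = ⁅x, g⁆ ^ p = 1` and `x ^ p ∈ Z(G)`. By induction on `|G|`, `G ⧸ Z(G)` is
therefore a `p`-group, in which subgroups of index `p` are normal; hence every `C(x)` is normal.
Normality gives `C(a), C(b) ≤ C(⁅a, b⁆)`; were `⁅a, b⁆` not central, the three indices would all be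
`p`, forcing `C(a) = C(b)`, so `a` would commute with `b`. Thus `G ⧸ Z(G)` is abelian, and the
homomorphism argument now applies to every `x`.
-/

open Subgroup
open scoped commutatorElement

section General

variable {G : Type*} [Group G]

theorem Subgroup.eq_of_le_of_index_eq {H K : Subgroup G} [H.FiniteIndex]
    (hle : H ≤ K) (hidx : H.index = K.index) : H = K :=
  hle.eq_of_not_lt fun hlt => (index_strictAnti hlt).ne hidx.symm

theorem QuotientGroup.mk_mem_center_iff {N : Subgroup G} [N.Normal] {x : G} :
    (x : G ⧸ N) ∈ center (G ⧸ N) ↔ ∀ y, ⁅x, y⁆ ∈ N :=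
  (SetLike.ext_iff.mp (Subgroup.upperCentralSeriesStep_eq_comap_center N) x).symm

theorem IsPGroup.of_quotient {p : ℕ} {N : Subgroup G} [N.Normal]
    (hN : IsPGroup p N) (hQ : IsPGroup p (G ⧸ N)) : IsPGroup p G := by
  intro g
  obtain ⟨j, hj⟩ := hQ g
  rw [← QuotientGroup.mk_pow, QuotientGroup.eq_one_iff] at hj
  obtain ⟨k, hk⟩ := hN ⟨_, hj⟩
  refine ⟨j + k, ?_⟩
  rw [pow_add, pow_mul]
  exact congrArg Subtype.val hk

theorem IsPGroup.normal_of_index_eq [Finite G] {p : ℕ} [hp : Fact p.Prime]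
    (hG : IsPGroup p G) {H : Subgroup G} (hH : H.index = p) : H.Normal := by
  obtain ⟨n, hn⟩ := IsPGroup.iff_card.mp hG
  refine normal_of_index_eq_minFac_card ?_
  have hn0 : n ≠ 0 := by
    rintro rfl
    have := hH ▸ H.index_dvd_card
    rw [hn, pow_zero, Nat.dvd_one] at this
    exact hp.out.ne_one this
  rw [hn, hp.out.pow_minFac hn0, hH]

theorem commutatorElement_mul_right_of_mem_center {x : G} (hx : ∀ g, ⁅x, g⁆ ∈ center G)
    (g h : G) : ⁅x, g * h⁆ = ⁅x, g⁆ * ⁅x, h⁆ := by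
  rw [commutatorElement_mul_right_eq_mul_conj, mul_assoc _ g, mem_center_iff.mp (hx h) g,
    ← mul_assoc, mul_inv_cancel_right]

theorem commutatorElement_pow_left_of_mem_center {x g : G} (hx : ⁅x, g⁆ ∈ center G) (n : ℕ) :
    ⁅x ^ n, g⁆ = ⁅x, g⁆ ^ n := by
  induction n with
  | zero => simp
  | succ n ih =>
    rw [pow_succ', commutatorElement_mul_left_eq_conj_mul, ih, mem_center_iff.mp (pow_mem hx n) x,
      mul_inv_cancel_right, pow_succ]

def commutatorHom {x : G} (hx : ∀ g, ⁅x, g⁆ ∈ center G) : G →* G :=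
  MonoidHom.mk' (fun g => ⁅x, g⁆) (commutatorElement_mul_right_of_mem_center hx)

theorem ker_commutatorHom {x : G} (hx : ∀ g, ⁅x, g⁆ ∈ center G) :
    (commutatorHom hx).ker = centralizer {x} := by
  ext g
  rw [MonoidHom.mem_ker, mem_centralizer_singleton_iff]
  exact commutatorElement_eq_one_iff_mul_comm.trans eq_comm

theorem commutatorElement_pow_index_centralizer {x : G} (hx : ∀ g, ⁅x, g⁆ ∈ center G) (g : G) :
    ⁅x, g⁆ ^ (centralizer {x}).index = 1 := by
  rw [← ker_commutatorHom hx, index_ker]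
  exact congrArg Subtype.val
    (pow_card_eq_one' (G := (commutatorHom hx).range) (x := ⟨⁅x, g⁆, g, rfl⟩))

theorem pow_index_centralizer_mem_center {x : G} (hx : ∀ g, ⁅x, g⁆ ∈ center G) :
    x ^ (centralizer {x}).index ∈ center G := by
  refine mem_center_iff.mpr fun g => ?_
  have := commutatorElement_pow_left_of_mem_center (hx g) (centralizer {x}).index
  rw [commutatorElement_pow_index_centralizer hx, commutatorElement_eq_one_iff_mul_comm] at this
  exact this.symm

theorem centralizer_le_centralizer_commutatorElement_left {a : G} (hN : (centralizer {a}).Normal)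
    (b : G) : centralizer {a} ≤ centralizer {⁅a, b⁆} := by
  intro c hc
  have hca : Commute c a := mem_centralizer_singleton_iff.mp hc
  have hca' : Commute (b⁻¹ * c * b) a := by
    have := hN.conj_mem c hc b⁻¹
    rw [inv_inv] at this
    exact mem_centralizer_singleton_iff.mp this
  have hcb : Commute c (b * a⁻¹ * b⁻¹) := by simpa [mul_assoc] using hca'.inv_right.conj b
  rw [mem_centralizer_singleton_iff, commutatorElement_def, mul_assoc _ b, mul_assoc]
  exact (hca.mul_right hcb).eq

theorem centralizer_le_centralizer_commutatorElement_right {b : G} (hN : (centralizer {b}).Normal)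
    (a : G) : centralizer {b} ≤ centralizer {⁅a, b⁆} := by
  intro c hc
  have hc' : Commute c ⁅b, a⁆ :=
    mem_centralizer_singleton_iff.mp (centralizer_le_centralizer_commutatorElement_left hN a hc)
  rw [mem_centralizer_singleton_iff, ← commutatorElement_inv]
  exact hc'.inv_right.eq

end General

/-- `G` is of conjugate type `(p, 1)`. -/
def IsConjugateType (G : Type*) [Group G] (p : ℕ) : Prop :=
  ∀ x : G, x ∉ center G → (centralizer {x}).index = p

namespace IsConjugateType

variable {G : Type*} [Group G] {p : ℕ}

theorem pow_mem_center (h : IsConjugateType G p) {x : G} (hx : ∀ g, ⁅x, g⁆ ∈ center G) :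
    x ^ p ∈ center G := by
  by_cases hxZ : x ∈ center G
  · exact pow_mem hxZ p
  · exact h x hxZ ▸ pow_index_centralizer_mem_center hx

theorem mem_center_of_sylow_le_centralizer [Finite G] [Fact p.Prime] (h : IsConjugateType G p)
    (P : Sylow p G) {x : G} (hP : (P : Subgroup G) ≤ centralizer {x}) : x ∈ center G := by
  by_contra hx
  have hdvd := index_dvd_of_le hP
  rw [h x hx] at hdvd
  exact P.not_dvd_index hdvd

theorem center_ne_bot [Finite G] [Fact p.Prime] (h : IsConjugateType G p) {x : G}
    (hx : x ∉ center G) : center G ≠ ⊥ := by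
  obtain ⟨P⟩ : Nonempty (Sylow p G) := inferInstance
  have : Nontrivial P :=
    (nontrivial_iff_ne_bot _).mpr (P.ne_bot_of_dvd_card (h x hx ▸ index_dvd_card _))
  have := P.isPGroup'.center_nontrivial
  obtain ⟨⟨u, huP⟩, hu, hu1⟩ := (center P).exists_ne_one_of_nontrivial
  have huZ : u ∈ center G := h.mem_center_of_sylow_le_centralizer P fun y hy =>
    mem_centralizer_singleton_iff.mpr (congrArg Subtype.val (mem_center_iff.mp hu ⟨y, hy⟩))
  exact (nontrivial_iff_ne_bot _).mp
    ((nontrivial_iff_exists_ne_one _).mpr ⟨u, huZ, fun h1 => hu1 (Subtype.ext h1)⟩)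

theorem quotient_center [Fact p.Prime] (h : IsConjugateType G p) :
    IsConjugateType (G ⧸ center G) p := by
  intro x' hx'
  obtain ⟨x, rfl⟩ := QuotientGroup.mk_surjective x'
  have hx : x ∉ center G := fun hx => hx' <| QuotientGroup.mk_mem_center_iff.mpr fun y => by
    rw [commutatorElement_eq_one_iff_mul_comm.mpr (mem_center_iff.mp hx y).symm]
    exact one_mem _
  have hdvd : (centralizer {(x : G ⧸ center G)}).index ∣ p := by
    rw [← h x hx, ← index_map_eq _ (QuotientGroup.mk'_surjective (center G))
      (by rw [QuotientGroup.ker_mk']; exact center_le_centralizer _)]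
    refine index_dvd_of_le ?_
    simpa using map_centralizer_le_centralizer_image {x} (QuotientGroup.mk' (center G))
  refine ((Nat.dvd_prime Fact.out).mp hdvd).resolve_left fun h1 => hx' ?_
  rwa [index_eq_one, centralizer_eq_top_iff_subset, Set.singleton_subset_iff] at h1

theorem isPGroup_quotient_center [Finite G] [Fact p.Prime] (h : IsConjugateType G p) :
    IsPGroup p (G ⧸ center G) := by
  induction hn : Nat.card G using Nat.strong_induction_on generalizing G with
  | _ n ih =>
  by_cases hG : center G = ⊤
  · exact IsPGroup.of_card (n := 0) (by rw [pow_zero, ← index_eq_card, index_eq_one.mpr hG])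
  obtain ⟨x, -, hx⟩ := SetLike.exists_of_lt (lt_top_iff_ne_top.mpr hG)
  have hlt : Nat.card (G ⧸ center G) < n := by
    rw [← hn, ← index_eq_card, ← (center G).index_mul_card]
    exact lt_mul_of_one_lt_right (Nat.pos_of_ne_zero index_ne_zero_of_finite)
      ((one_lt_card_iff_ne_bot _).mpr (h.center_ne_bot hx))
  refine IsPGroup.of_quotient ?_ (ih _ hlt h.quotient_center rfl)
  rintro ⟨y', hy'⟩
  refine ⟨1, Subtype.ext ?_⟩
  obtain ⟨y, rfl⟩ := QuotientGroup.mk_surjective y'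
  rw [pow_one, SubmonoidClass.coe_pow, OneMemClass.coe_one, ← QuotientGroup.mk_pow,
    QuotientGroup.eq_one_iff]
  exact h.pow_mem_center (QuotientGroup.mk_mem_center_iff.mp hy')

theorem centralizer_normal [Finite G] [Fact p.Prime] (h : IsConjugateType G p) {x : G}
    (hx : x ∉ center G) : (centralizer {x}).Normal := by
  have hle : (QuotientGroup.mk' (center G)).ker ≤ centralizer {x} := by
    rw [QuotientGroup.ker_mk']
    exact center_le_centralizer _
  have hmap : ((centralizer {x}).map (QuotientGroup.mk' (center G))).Normal :=
    h.isPGroup_quotient_center.normal_of_index_eq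
      (by rw [index_map_eq _ (QuotientGroup.mk'_surjective _) hle, h x hx])
  simpa only [comap_map_eq, sup_of_le_left hle] using hmap.comap (QuotientGroup.mk' (center G))

theorem commutatorElement_mem_center [Finite G] [Fact p.Prime] (h : IsConjugateType G p)
    (a b : G) : ⁅a, b⁆ ∈ center G := by
  by_contra hab
  have hne : ¬Commute a b := fun hc => hab (commutatorElement_eq_one_iff_commute.mpr hc ▸ one_mem _)
  have ha : a ∉ center G := fun ha => hne (mem_center_iff.mp ha b).symm
  have hb : b ∉ center G := fun hb => hne (mem_center_iff.mp hb a)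
  have hCa : centralizer {a} = centralizer {⁅a, b⁆} :=
    eq_of_le_of_index_eq
      (centralizer_le_centralizer_commutatorElement_left (h.centralizer_normal ha) b)
      (by rw [h a ha, h _ hab])
  have hCb : centralizer {b} = centralizer {⁅a, b⁆} :=
    eq_of_le_of_index_eq
      (centralizer_le_centralizer_commutatorElement_right (h.centralizer_normal hb) a)
      (by rw [h b hb, h _ hab])
  have haCb : a ∈ centralizer {b} := hCb ▸ hCa ▸ mem_centralizer_singleton_iff.mpr rfl
  exact hne (mem_centralizer_singleton_iff.mp haCb)

end IsConjugateType

theorem stmt8 (G : Type*) [Group G] [Finite G] (p : ℕ) (hp : p.Prime)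
    (h : ∀ x : G, x ∉ Subgroup.center G → (Subgroup.centralizer {x}).index = p) :
    (∀ a b : G ⧸ Subgroup.center G, a * b = b * a) ∧
      (∀ a : G ⧸ Subgroup.center G, a ^ p = 1) := by
  have : Fact p.Prime := ⟨hp⟩
  have hG : IsConjugateType G p := h
  refine ⟨fun a b => ?_, fun a => ?_⟩
  · obtain ⟨a, rfl⟩ := QuotientGroup.mk_surjective a
    have ha := QuotientGroup.mk_mem_center_iff.mpr (hG.commutatorElement_mem_center a)
    exact (mem_center_iff.mp ha b).symm
  · obtain ⟨a, rfl⟩ := QuotientGroup.mk_surjective a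
    rw [← QuotientGroup.mk_pow, QuotientGroup.eq_one_iff]
    exact hG.pow_mem_center (hG.commutatorElement_mem_center a)
end

section
/- Let G be a finite F-group with [G : Z(G)] = p^k (p prime) such that [Z(C(x)) : Z(G)] ≤ p^2 for all non-central x ∈ G. If v is the number of distinct proper centralizers C(x) with [Z(C(x)) : Z(G)] = p^2, then |Cent(G)| = p^{k−1} + p^{k−2} + ⋯ + p + 2 − vp. -/
/-!
In an F-group a non-central `g ∈ Z(C(x))` satisfies `C(x) ≤ C(g)`, hence `C(g) = C(x)`; so the
sets `Z(C(x)) \ Z(G)`, one for each proper centralizer, partition the non-central elements.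
Counting them in units of `|Z(G)|` gives `∑ ([Z(C(x)) : Z(G)] - 1) = p ^ k - 1`. Every index is
`p` or `p ^ 2`, so with `n` proper centralizers this reads `(p - 1) (n + v p) = p ^ k - 1`, while
`|Cent(G)| = n + 1`.
-/

open Subgroup

namespace Subgroup

variable {G : Type*} [Group G]

theorem card_eq_relIndex_mul_card {H K : Subgroup G} (h : H ≤ K) :
    Nat.card K = H.relIndex K * Nat.card H := by
  rw [relIndex, ← index_mul_card (H.subgroupOf K),
    Nat.card_congr (subgroupOfEquivOfLe h).toEquiv]

theorem ncard_sdiff_of_le [Finite G] {H K : Subgroup G} (h : H ≤ K) :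
    ((K : Set G) \ H).ncard = (H.relIndex K - 1) * Nat.card H := by
  have hsplit := Set.ncard_sdiff_add_ncard_of_subset (s := (H : Set G)) (t := K) h
  rw [← Nat.card_coe_set_eq (H : Set G), ← Nat.card_coe_set_eq (K : Set G)] at hsplit
  rw [Nat.sub_mul, one_mul, ← card_eq_relIndex_mul_card h]
  exact Nat.eq_sub_of_add_eq hsplit

end Subgroup

theorem Nat.eq_self_or_eq_sq_of_dvd_prime_pow {p k n : ℕ} (hp : p.Prime) (hn : n ∣ p ^ k)
    (hn1 : n ≠ 1) (hn2 : n ≤ p ^ 2) : n = p ∨ n = p ^ 2 := by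
  obtain ⟨j, -, rfl⟩ := (Nat.dvd_prime_pow hp).mp hn
  have hj : j ≤ 2 := (Nat.pow_le_pow_iff_right hp.one_lt).mp hn2
  interval_cases j
  · exact absurd (pow_zero p) hn1
  · exact Or.inl (pow_one p)
  · exact Or.inr rfl

theorem finsum_mem_sub_one_of_eq_or_eq_sq {α : Type*} {T : Set α} (hT : T.Finite) {f : α → ℕ}
    {p : ℕ} (hf : ∀ a ∈ T, f a = p ∨ f a = p ^ 2) :
    ∑ᶠ a ∈ T, (f a - 1) = (p - 1) * (T.ncard + p * {a ∈ T | f a = p ^ 2}.ncard) := by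
  set S := {a | f a = p ^ 2}
  have hconst (s : Set α) (c : ℕ) : ∑ᶠ _ ∈ s, c = c * s.ncard := by
    rw [← finsum_one, mul_finsum_mem, mul_one]
  rw [← finsum_mem_inter_add_sdiff S hT,
    finsum_mem_congr rfl (fun a ha => congrArg (· - 1) ha.2),
    finsum_mem_congr rfl (fun a ha => congrArg (· - 1) ((hf a ha.1).resolve_right ha.2)),
    hconst, hconst, ← Set.ncard_inter_add_ncard_sdiff_eq_ncard T S hT]
  change _ = _ * ((T ∩ S).ncard + (T \ S).ncard + p * (T ∩ S).ncard)
  obtain _ | q := p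
  · simp
  · rw [Nat.add_sub_cancel, show (q + 1) ^ 2 - 1 = q * (q + 2) by rw [Nat.sub_eq_of_eq_add]; ring]
    ring

section FGroup

variable {G : Type*} [Group G]

-- `centerOf (centralizer {x})` is `centerCentralizer x` by definition.
def centerOf (H : Subgroup G) : Subgroup G := H ⊓ centralizer H

variable (G) in
def properCentralizers : Set (Subgroup G) := (fun x => centralizer {x}) '' (center G : Set G)ᶜ

theorem mem_centerCentralizer_self (x : G) : x ∈ centerCentralizer x :=
  ⟨mem_centralizer_singleton_iff.mpr rfl, fun _ hc => mem_centralizer_singleton_iff.mp hc⟩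

theorem center_le_centerCentralizer (x : G) : center G ≤ centerCentralizer x := fun _ hz =>
  ⟨center_le_centralizer _ hz, center_le_centralizer _ hz⟩

theorem relIndex_centerCentralizer_ne_one {x : G} (hx : x ∉ center G) :
    (center G).relIndex (centerCentralizer x) ≠ 1 := fun h =>
  hx (relIndex_eq_one.mp h (mem_centerCentralizer_self x))

theorem IsFGroup.centralizer_eq_iff_mem_centerCentralizer (hF : IsFGroup G) {x g : G}
    (hx : x ∉ center G) (hg : g ∉ center G) :
    centralizer {g} = centralizer {x} ↔ g ∈ centerCentralizer x := by
  constructor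
  · intro h
    simpa only [centerCentralizer, h] using mem_centerCentralizer_self g
  · intro hgx
    exact (hF x g hx hg fun c hc => mem_centralizer_singleton_iff.mpr (hgx.2 c hc)).symm

theorem cent_eq_insert_top_properCentralizers : cent G = insert ⊤ (properCentralizers G) := by
  ext H
  constructor
  · rintro ⟨x, rfl⟩
    by_cases hx : x ∈ center G
    · exact Or.inl (centralizer_eq_top_iff_subset.mpr (Set.singleton_subset_iff.mpr hx))
    · exact Or.inr ⟨x, hx, rfl⟩
  · rintro (rfl | ⟨x, -, rfl⟩)
    · exact ⟨1, centralizer_eq_top_iff_subset.mpr (Set.singleton_subset_iff.mpr (one_mem _))⟩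
    · exact ⟨x, rfl⟩

theorem top_notMem_properCentralizers : ⊤ ∉ properCentralizers G := by
  rintro ⟨x, hx, h⟩
  exact hx (centralizer_eq_top_iff_subset.mp h rfl)

theorem numCent_eq_ncard_properCentralizers_add_one [Finite G] :
    numCent G = (properCentralizers G).ncard + 1 := by
  rw [numCent, cent_eq_insert_top_properCentralizers,
    Set.ncard_insert_of_notMem top_notMem_properCentralizers]

theorem biUnion_properCentralizers_sdiff_center :
    ⋃ H ∈ properCentralizers G, (centerOf H : Set G) \ center G = (center G : Set G)ᶜ := by
  ext g
  simp only [Set.mem_iUnion₂, Set.mem_sdiff, exists_prop, Set.mem_compl_iff]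
  constructor
  · rintro ⟨_, -, -, hg⟩
    exact hg
  · intro hg
    exact ⟨_, ⟨g, hg, rfl⟩, mem_centerCentralizer_self g, hg⟩

theorem IsFGroup.pairwiseDisjoint_properCentralizers (hF : IsFGroup G) :
    (properCentralizers G).PairwiseDisjoint fun H => (centerOf H : Set G) \ center G := by
  rintro _ ⟨x, hx, rfl⟩ _ ⟨y, hy, rfl⟩ hxy
  refine Set.disjoint_left.mpr fun g hgx hgy => hxy ?_
  dsimp only at hgx hgy ⊢
  rw [← (hF.centralizer_eq_iff_mem_centerCentralizer hx hgx.2).mpr hgx.1,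
    (hF.centralizer_eq_iff_mem_centerCentralizer hy hgy.2).mpr hgy.1]

theorem IsFGroup.finsum_relIndex_sub_one [Finite G] (hF : IsFGroup G) :
    ∑ᶠ H ∈ properCentralizers G, ((center G).relIndex (centerOf H) - 1) =
      (center G).index - 1 := by
  refine Nat.eq_of_mul_eq_mul_right (Nat.card_pos (α := center G)) ?_
  calc (∑ᶠ H ∈ properCentralizers G, ((center G).relIndex (centerOf H) - 1)) *
        Nat.card (center G)
      = ∑ᶠ H ∈ properCentralizers G, ((centerOf H : Set G) \ center G).ncard := by
        rw [finsum_mem_mul]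
        refine finsum_mem_congr rfl ?_
        rintro _ ⟨x, -, rfl⟩
        exact (ncard_sdiff_of_le (center_le_centerCentralizer x)).symm
    _ = (((⊤ : Subgroup G) : Set G) \ center G).ncard := by
        rw [← (Set.toFinite _).ncard_biUnion (fun _ _ => Set.toFinite _)
          hF.pairwiseDisjoint_properCentralizers, biUnion_properCentralizers_sdiff_center,
          coe_top, Set.compl_eq_univ_sdiff]
    _ = ((center G).index - 1) * Nat.card (center G) := by
        rw [ncard_sdiff_of_le le_top, relIndex_top_right]

end FGroup

theorem stmt11 (G : Type*) [Group G] [Finite G] (hF : IsFGroup G)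
    (p k : ℕ) (hp : p.Prime) (hk : (Subgroup.center G).index = p ^ k)
    (hle : ∀ x : G, x ∉ Subgroup.center G →
      (Subgroup.center G).relIndex (centerCentralizer x) ≤ p ^ 2)
    (v : ℕ)
    (hv : v = ({H | ∃ x : G, x ∉ Subgroup.center G ∧ H = Subgroup.centralizer {x} ∧
      (Subgroup.center G).relIndex (centerCentralizer x) = p ^ 2} :
        Set (Subgroup G)).ncard) :
    numCent G = (p ^ k - 1) / (p - 1) + 1 - v * p := by
  have hvalues : ∀ H ∈ properCentralizers G,
      (center G).relIndex (centerOf H) = p ∨ (center G).relIndex (centerOf H) = p ^ 2 := by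
    rintro _ ⟨x, hx, rfl⟩
    exact Nat.eq_self_or_eq_sq_of_dvd_prime_pow hp
      (hk ▸ relIndex_dvd_index_of_le (center_le_centerCentralizer x))
      (relIndex_centerCentralizer_ne_one hx) (hle x hx)
  have hv' : v = {H ∈ properCentralizers G | (center G).relIndex (centerOf H) = p ^ 2}.ncard := by
    rw [hv]
    congr 1
    ext H
    constructor
    · rintro ⟨x, hx, rfl, hr⟩
      exact ⟨⟨x, hx, rfl⟩, hr⟩
    · rintro ⟨⟨x, hx, rfl⟩, hr⟩
      exact ⟨x, hx, rfl, hr⟩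
  have hcount := hF.finsum_relIndex_sub_one
  rw [finsum_mem_sub_one_of_eq_or_eq_sq (Set.toFinite _) hvalues, ← hv', hk] at hcount
  rw [numCent_eq_ncard_properCentralizers_add_one, ← hcount,
    Nat.mul_div_cancel_left _ (Nat.sub_pos_of_lt hp.one_lt), mul_comm v p]
  omega
end
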